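/- Let β > 0, let p, q, m be positive integers with m ≥ 1, fix an index i ∈ {1, …, m}, let Ẑ, Λ₁, Λ₂, Z^1, …, Z^m be real p×q matrices, let W^r for r ≠ i be fixed real p×q matrices, and let J be the all-ones p×q matrix. Write R = ∑_{r≠i} W^r ⊙ Z^r and Q = ∑_{r≠i} W^r. Then the function G(W^i) = ⟨Λ₁, Ẑ − W^i ⊙ Z^i − R⟩_F + (β/2)‖Ẑ − W^i ⊙ Z^i − R‖_F² + ⟨Λ₂, W^i + Q − J⟩_F + (β/2)‖W^i + Q − J‖_F² has a unique global minimizer over the real p×q matrices, namely W^{i*} = (β(Ẑ ⊙ Z^i + J − ∑_{r≠i} W^r ⊙ (Z^r ⊙ Z^i + J)) + Λ₁ ⊙ Z^i − Λ₂) ⊘ (β(Z^i ⊙ Z^i + J)); here every entry of β(Z^i ⊙ Z^i + J) is positive so the entrywise division is well defined. -/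
import Mathlib

open Matrix

/-- Frobenius norm of a real matrix. -/
noncomputable def frobNorm {p q : ℕ} (A : Matrix (Fin p) (Fin q) ℝ) : ℝ :=
  Real.sqrt (∑ j, ∑ k, (A j k) ^ 2)

/-- Frobenius inner product of two real matrices. -/
def frobInner {p q : ℕ} (A B : Matrix (Fin p) (Fin q) ℝ) : ℝ :=
  ∑ j, ∑ k, A j k * B j k

/-- Entrywise (Hadamard) division of two real matrices. -/
noncomputable def hdiv {p q : ℕ} (A B : Matrix (Fin p) (Fin q) ℝ) :
    Matrix (Fin p) (Fin q) ℝ :=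
  Matrix.of fun j k => A j k / B j k

lemma frobNorm_sq {p q : ℕ} (A : Matrix (Fin p) (Fin q) ℝ) :
    frobNorm A ^ 2 = ∑ j, ∑ k, (A j k) ^ 2 := by
  unfold frobNorm
  rw [Real.sq_sqrt]
  positivity

lemma quad_key (β z zh r qv l1 l2 w ws : ℝ) (hβ : 0 < β)
    (hws : ws = (β * (zh * z + 1 - (r * z + qv)) + l1 * z - l2) / (β * (z ^ 2 + 1))) :
    (l1 * (zh - w * z - r) + β / 2 * (zh - w * z - r) ^ 2
      + l2 * (w + qv - 1) + β / 2 * (w + qv - 1) ^ 2)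
    - (l1 * (zh - ws * z - r) + β / 2 * (zh - ws * z - r) ^ 2
      + l2 * (ws + qv - 1) + β / 2 * (ws + qv - 1) ^ 2)
    = β * (z ^ 2 + 1) / 2 * (w - ws) ^ 2 := by
  have hc : β * (z ^ 2 + 1) ≠ 0 := by positivity
  subst hws
  field_simp
  ring

theorem stmt7 (β : ℝ) (hβ : 0 < β) (p q m : ℕ) (hp : 0 < p) (hq : 0 < q) (hm : 1 ≤ m)
    (i : Fin m) (Zhat Λ₁ Λ₂ : Matrix (Fin p) (Fin q) ℝ)
    (Zi : Fin m → Matrix (Fin p) (Fin q) ℝ)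
    (W : Fin m → Matrix (Fin p) (Fin q) ℝ)
    (J : Matrix (Fin p) (Fin q) ℝ) (hJ : ∀ j k, J j k = 1) :
    let R : Matrix (Fin p) (Fin q) ℝ := ∑ r ∈ Finset.univ.erase i, W r ⊙ Zi r
    let Q : Matrix (Fin p) (Fin q) ℝ := ∑ r ∈ Finset.univ.erase i, W r
    let G : Matrix (Fin p) (Fin q) ℝ → ℝ := fun Wi =>
      frobInner Λ₁ (Zhat - Wi ⊙ Zi i - R) + (β / 2) * (frobNorm (Zhat - Wi ⊙ Zi i - R)) ^ 2
        + frobInner Λ₂ (Wi + Q - J) + (β / 2) * (frobNorm (Wi + Q - J)) ^ 2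
    let Wstar : Matrix (Fin p) (Fin q) ℝ :=
      hdiv (β • (Zhat ⊙ Zi i + J - ∑ r ∈ Finset.univ.erase i, W r ⊙ (Zi r ⊙ Zi i + J))
              + Λ₁ ⊙ Zi i - Λ₂)
           (β • (Zi i ⊙ Zi i + J))
    (∀ j k, 0 < (β • (Zi i ⊙ Zi i + J)) j k) ∧
    (∀ Wi, G Wstar ≤ G Wi) ∧
    (∀ Wi, (∀ Y, G Wi ≤ G Y) → Wi = Wstar) := by
  intro R Q G Wstar
  -- entry of Wstar
  have hWs : ∀ j k, Wstar j k =
      (β * (Zhat j k * Zi i j k + 1 - (R j k * Zi i j k + Q j k)) + Λ₁ j k * Zi i j k - Λ₂ j k)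
        / (β * ((Zi i j k) ^ 2 + 1)) := by
    intro j k
    show ((β • (Zhat ⊙ Zi i + J - ∑ r ∈ Finset.univ.erase i, W r ⊙ (Zi r ⊙ Zi i + J))
              + Λ₁ ⊙ Zi i - Λ₂) j k) / ((β • (Zi i ⊙ Zi i + J)) j k) = _
    have hsum : (∑ r ∈ Finset.univ.erase i, W r ⊙ (Zi r ⊙ Zi i + J)) j k
        = R j k * Zi i j k + Q j k := by
      show _ = (∑ r ∈ Finset.univ.erase i, W r ⊙ Zi r) j k * Zi i j k
        + (∑ r ∈ Finset.univ.erase i, W r) j k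
      simp only [Matrix.sum_apply, Matrix.hadamard_apply, Matrix.add_apply, hJ,
        Finset.sum_mul, ← Finset.sum_add_distrib]
      apply Finset.sum_congr rfl
      intro r _
      ring
    simp only [Matrix.smul_apply, Matrix.sub_apply, Matrix.add_apply, Matrix.hadamard_apply,
      hJ, smul_eq_mul, hsum]
    ring_nf
  have hGsum : ∀ Wi : Matrix (Fin p) (Fin q) ℝ, G Wi = ∑ j, ∑ k,
      (Λ₁ j k * (Zhat j k - Wi j k * Zi i j k - R j k)
        + β / 2 * (Zhat j k - Wi j k * Zi i j k - R j k) ^ 2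
        + Λ₂ j k * (Wi j k + Q j k - 1)
        + β / 2 * (Wi j k + Q j k - 1) ^ 2) := by
    intro Wi
    show frobInner Λ₁ (Zhat - Wi ⊙ Zi i - R) + (β / 2) * (frobNorm (Zhat - Wi ⊙ Zi i - R)) ^ 2
        + frobInner Λ₂ (Wi + Q - J) + (β / 2) * (frobNorm (Wi + Q - J)) ^ 2 = _
    rw [frobNorm_sq, frobNorm_sq]
    simp only [frobInner, Finset.mul_sum, ← Finset.sum_add_distrib]
    apply Finset.sum_congr rfl; intro j _
    apply Finset.sum_congr rfl; intro k _
    simp only [Matrix.sub_apply, Matrix.add_apply, Matrix.hadamard_apply, hJ]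
    try ring
  have hdiff : ∀ Wi : Matrix (Fin p) (Fin q) ℝ, G Wi - G Wstar
      = ∑ j, ∑ k, (β * ((Zi i j k) ^ 2 + 1) / 2) * (Wi j k - Wstar j k) ^ 2 := by
    intro Wi
    rw [hGsum Wi, hGsum Wstar, ← Finset.sum_sub_distrib]
    apply Finset.sum_congr rfl; intro j _
    rw [← Finset.sum_sub_distrib]
    apply Finset.sum_congr rfl; intro k _
    rw [quad_key β (Zi i j k) (Zhat j k) (R j k) (Q j k) (Λ₁ j k) (Λ₂ j k) (Wi j k)
      (Wstar j k) hβ (hWs j k)]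
  have hpos : ∀ j k, (0:ℝ) < β * ((Zi i j k) ^ 2 + 1) := by
    intro j k; positivity
  refine ⟨?_, ?_, ?_⟩
  · intro j k
    simp only [Matrix.smul_apply, Matrix.add_apply, Matrix.hadamard_apply, hJ, smul_eq_mul]
    nlinarith [sq_nonneg (Zi i j k), hpos j k]
  · intro Wi
    have h := hdiff Wi
    have : 0 ≤ G Wi - G Wstar := by
      rw [h]
      apply Finset.sum_nonneg; intro j _
      apply Finset.sum_nonneg; intro k _
      positivity
    linarith
  · intro Wi hmin
    have h1 : G Wi - G Wstar ≤ 0 := by linarith [hmin Wstar]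
    rw [hdiff Wi] at h1
    have hz : ∑ j, ∑ k, (β * ((Zi i j k) ^ 2 + 1) / 2) * (Wi j k - Wstar j k) ^ 2 = 0 := by
      have : 0 ≤ ∑ j, ∑ k, (β * ((Zi i j k) ^ 2 + 1) / 2) * (Wi j k - Wstar j k) ^ 2 := by
        apply Finset.sum_nonneg; intro j _
        apply Finset.sum_nonneg; intro k _
        positivity
      linarith
    ext j k
    have h2 : ∀ j ∈ Finset.univ, (∑ k, (β * ((Zi i j k) ^ 2 + 1) / 2) * (Wi j k - Wstar j k) ^ 2) = 0 := by
      rw [← Finset.sum_eq_zero_iff_of_nonneg]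
      · exact hz
      · intro j _
        apply Finset.sum_nonneg; intro k _
        positivity
    have h3 : ∀ k ∈ Finset.univ, (β * ((Zi i j k) ^ 2 + 1) / 2) * (Wi j k - Wstar j k) ^ 2 = 0 := by
      rw [← Finset.sum_eq_zero_iff_of_nonneg]
      · exact h2 j (Finset.mem_univ j)
      · intro k _; positivity
    have h4 := h3 k (Finset.mem_univ k)
    have h5 : (Wi j k - Wstar j k) ^ 2 = 0 := by
      have := hpos j k
      have hne : β * ((Zi i j k) ^ 2 + 1) / 2 ≠ 0 := by positivity
      exact (mul_eq_zero.mp h4).resolve_left hne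
    have := pow_eq_zero_iff (n := 2) (by norm_num) |>.mp h5
    linarith
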